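/- arXiv:1002.2845 — 2 statements merged into one kernel-verified Lean document; each statement's English description precedes it below -/
import Mathlib

section
/- Bolshev's recursion: for any nondecreasing threshold t = (t₁,...,tₖ) ∈ [0,1]^k, Ψₖ(t₁,...,tₖ) = 1 − Σ_{i=1}^{k} C(k,i) (1−t_{k−i+1})^i Ψ_{k−i}(t₁,...,t_{k−i}), where Ψ denotes the joint c.d.f. of order statistics of i.i.d. uniform variables. -/
open MeasureTheory Finset
open scoped Classical

noncomputable def unifM : Measure ℝ := volume.restrict (Set.Ioo (0:ℝ) 1)

noncomputable def iidUnif (k : ℕ) : Measure (Fin k → ℝ) := Measure.pi fun _ => unifM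

/-- `Psi k t` is the probability that the order statistics `U_(1) ≤ ... ≤ U_(k)` of
`k` i.i.d. uniform variables on `(0,1)` satisfy `U_(j) ≤ t j` for all `1 ≤ j ≤ k`
(1-indexed thresholds), expressed via the counting characterization
`U_(j) ≤ s ↔ #{i : U i ≤ s} ≥ j`. By convention `Psi 0 t = 1`. -/
noncomputable def Psi (k : ℕ) (t : ℕ → ℝ) : ℝ :=
  (iidUnif k {x | ∀ j ∈ Finset.Icc 1 k,
    j ≤ (Finset.univ.filter (fun i : Fin k => x i ≤ t j)).card}).toReal

/-!
If the order statistics of `x ∈ ℝ^k` do not all stay below the thresholds, let `j` be the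
first index with `x_(j) > t j`. By monotonicity of `t` exactly `j - 1` coordinates are
`≤ t j`, so the set `S` of coordinates above `t j` has `i = k - j + 1 ≥ 1` elements, and the
coordinates outside `S` have their order statistics below `t 1, …, t (k - i)`. Conversely
these two conditions on a nonempty `S` force `j = k - #S + 1` to be the first crossing, so the
complement of the event is the disjoint union, over nonempty `S`, of events that constrain
the coordinates in `S` and outside `S` separately. By independence each has probability
`μ (t (k - i + 1), ∞) ^ i * Ψ_{k-i}`, and there are `k.choose i` sets of size `i`.
The argument works for any i.i.d. law `μ`; for the uniform law `μ (c, ∞) = 1 - c`.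
-/

section OrderStatistics

variable {ι : Type*} [Fintype ι]

noncomputable def countLE (x : ι → ℝ) (c : ℝ) : ℕ := #{l | x l ≤ c}

def orderStatsLE (n : ℕ) (t : ℕ → ℝ) : Set (ι → ℝ) :=
  {x | ∀ j ∈ Icc 1 n, j ≤ countLE x (t j)}

/-- `j` is the first index at which the `j`-th order statistic of `x` exceeds `t j`. -/
def IsFirstCrossing (x : ι → ℝ) (t : ℕ → ℝ) (j : ℕ) : Prop :=
  countLE x (t j) < j ∧ ∀ j' ∈ Ico 1 j, j' ≤ countLE x (t j')

def crossingEvent (t : ℕ → ℝ) (S : Finset ι) : Set (ι → ℝ) :=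
  {x | (∀ l ∈ S, t (Fintype.card ι - #S + 1) < x l) ∧
    (fun l : {l // l ∉ S} => x l) ∈ orderStatsLE (Fintype.card ι - #S) t}

variable {x : ι → ℝ} {t : ℕ → ℝ} {c d : ℝ} {n j : ℕ} {S : Finset ι}

lemma countLE_mono (h : c ≤ d) : countLE x c ≤ countLE x d :=
  card_le_card <| monotone_filter_right _ fun _ _ hl => hl.trans h

lemma card_filter_lt_eq : #{l | c < x l} = Fintype.card ι - countLE x c := by
  simp_rw [countLE, ← not_le, filter_not, card_sdiff_of_subset (filter_subset _ _), card_univ]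

lemma countLE_subtype_notMem (h : ∀ l ∈ S, c < x l) :
    countLE (fun l : {l // l ∉ S} => x l) c = countLE x c := by
  refine card_bij (fun l _ => l.1) ?_ (fun _ _ _ _ => Subtype.ext) ?_
  · intro l hl
    simpa using hl
  · intro l hl
    simp only [mem_filter, mem_univ, true_and] at hl
    exact ⟨⟨l, fun hS => (h l hS).not_ge hl⟩, by simpa using hl, rfl⟩

lemma measurable_countLE : Measurable fun x : ι → ℝ => countLE x c := by
  simp_rw [countLE, card_filter]
  exact Finset.measurable_sum _ fun l _ =>
    Measurable.ite (measurableSet_le (measurable_pi_apply l) measurable_const)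
      measurable_const measurable_const

lemma measurableSet_orderStatsLE : MeasurableSet (orderStatsLE (ι := ι) n t) := by
  simp only [orderStatsLE, Set.ofPred_forall]
  exact .iInter fun j => .iInter fun _ => measurable_countLE measurableSet_Ici

lemma IsFirstCrossing.eq {j' : ℕ} (h : IsFirstCrossing x t j) (h' : IsFirstCrossing x t j')
    (hj : 1 ≤ j) (hj' : 1 ≤ j') : j = j' := by
  by_contra hne
  rcases lt_or_gt_of_ne hne with hlt | hlt
  · exact (h'.2 j (mem_Ico.2 ⟨hj, hlt⟩)).not_gt h.1
  · exact (h.2 j' (mem_Ico.2 ⟨hj', hlt⟩)).not_gt h'.1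

lemma notMem_orderStatsLE_iff :
    x ∉ orderStatsLE n t ↔ ∃ j ∈ Icc 1 n, IsFirstCrossing x t j := by
  constructor
  · intro hx
    simp only [orderStatsLE, Set.mem_ofPred_eq, not_forall, not_le, exists_prop] at hx
    obtain ⟨j₀, hj₀, hlt₀⟩ := hx
    have hex : ∃ j, 1 ≤ j ∧ countLE x (t j) < j := ⟨j₀, (mem_Icc.1 hj₀).1, hlt₀⟩
    refine ⟨Nat.find hex, mem_Icc.2 ⟨(Nat.find_spec hex).1, ?_⟩, (Nat.find_spec hex).2, ?_⟩
    · exact (Nat.find_min' hex ⟨(mem_Icc.1 hj₀).1, hlt₀⟩).trans (mem_Icc.1 hj₀).2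
    · intro j' hj'
      obtain ⟨hj'1, hj'lt⟩ := mem_Ico.1 hj'
      exact not_lt.1 fun hlt => Nat.find_min hex hj'lt ⟨hj'1, hlt⟩
  · rintro ⟨j, hj, hlt, -⟩ hx
    exact (hx j hj).not_gt hlt

lemma IsFirstCrossing.countLE_eq (ht : MonotoneOn t (Set.Icc 1 n)) (hj : j ∈ Icc 1 n)
    (h : IsFirstCrossing x t j) : countLE x (t j) = j - 1 := by
  obtain ⟨hj1, hjn⟩ := mem_Icc.1 hj
  have hlt := h.1
  rcases hj1.eq_or_lt with rfl | hj1
  · omega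
  · have hprev := h.2 (j - 1) (mem_Ico.2 ⟨by omega, by omega⟩)
    have hmono : countLE x (t (j - 1)) ≤ countLE x (t j) :=
      countLE_mono (ht ⟨by omega, by omega⟩ ⟨by omega, by omega⟩ (by omega))
    omega

lemma mem_crossingEvent_iff (ht : MonotoneOn t (Set.Icc 1 (Fintype.card ι))) (hS : S.Nonempty) :
    x ∈ crossingEvent t S ↔ IsFirstCrossing x t (Fintype.card ι - #S + 1) ∧
      S = ({l | t (Fintype.card ι - #S + 1) < x l} : Finset ι) := by
  set k := Fintype.card ι
  set j := k - #S + 1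
  have hSk : #S ≤ k := card_le_univ S
  have hS1 : 1 ≤ #S := card_pos.2 hS
  have hmono : ∀ j' ∈ Ico 1 j, t j' ≤ t j := fun j' hj' => by
    obtain ⟨h1, h2⟩ := mem_Ico.1 hj'
    exact ht ⟨h1, by omega⟩ ⟨by omega, by omega⟩ h2.le
  have hcount : ∀ j' ∈ Ico 1 j, (∀ l ∈ S, t j < x l) →
      countLE (fun l : {l // l ∉ S} => x l) (t j') = countLE x (t j') := fun j' hj' habove =>
    countLE_subtype_notMem fun l hl => (hmono j' hj').trans_lt (habove l hl)
  have hIcc_Ico : ∀ j', j' ∈ Icc 1 (k - #S) ↔ j' ∈ Ico 1 j := fun j' => by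
    simp only [mem_Icc, mem_Ico]
    omega
  constructor
  · rintro ⟨habove, hbelow⟩
    have hcross : IsFirstCrossing x t j := by
      refine ⟨?_, fun j' hj' => ?_⟩
      · have hsub : ({l | x l ≤ t j} : Finset ι) ⊆ Sᶜ := fun l hl => by
          simp only [mem_filter, mem_univ, true_and] at hl
          exact mem_compl.2 fun hlS => (habove l hlS).not_ge hl
        have := card_le_card hsub
        rw [card_compl] at this
        exact Nat.lt_succ_of_le this
      · rw [← hcount j' hj' habove]
        exact hbelow j' ((hIcc_Ico j').2 hj')
    refine ⟨hcross, eq_of_subset_of_card_le (fun l hl => by simpa using habove l hl) ?_⟩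
    rw [card_filter_lt_eq, hcross.countLE_eq ht (mem_Icc.2 ⟨by omega, by omega⟩)]
    omega
  · rintro ⟨hcross, hSeq⟩
    have habove : ∀ l ∈ S, t j < x l := fun l hl => by
      rw [hSeq] at hl
      simpa using hl
    refine ⟨habove, fun j' hj' => ?_⟩
    rw [hcount j' ((hIcc_Ico j').1 hj') habove]
    exact hcross.2 j' ((hIcc_Ico j').1 hj')

lemma compl_orderStatsLE_eq_biUnion (ht : MonotoneOn t (Set.Icc 1 (Fintype.card ι))) :
    (orderStatsLE (Fintype.card ι) t)ᶜ =
      ⋃ S ∈ ({S | S.Nonempty} : Finset (Finset ι)), crossingEvent t S := by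
  ext x
  simp only [Set.mem_compl_iff, Set.mem_iUnion, mem_filter, mem_univ, true_and, exists_prop]
  constructor
  · intro hx
    obtain ⟨j, hj, hcross⟩ := notMem_orderStatsLE_iff.1 hx
    have hj' := mem_Icc.1 hj
    have hcard : #({l | t j < x l} : Finset ι) = Fintype.card ι - j + 1 := by
      rw [card_filter_lt_eq, hcross.countLE_eq ht hj]
      omega
    have hne : ({l | t j < x l} : Finset ι).Nonempty := card_pos.1 (by omega)
    refine ⟨_, hne, (mem_crossingEvent_iff ht hne).2 ?_⟩
    rw [show Fintype.card ι - #({l | t j < x l} : Finset ι) + 1 = j by omega]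
    exact ⟨hcross, rfl⟩
  · rintro ⟨S, hS, hx⟩
    refine notMem_orderStatsLE_iff.2 ⟨_, mem_Icc.2 ⟨le_add_self, ?_⟩,
      ((mem_crossingEvent_iff ht hS).1 hx).1⟩
    have := card_pos.2 hS
    have := card_le_univ S
    omega

lemma pairwiseDisjoint_crossingEvent (ht : MonotoneOn t (Set.Icc 1 (Fintype.card ι))) :
    (({S | S.Nonempty} : Finset (Finset ι)) : Set (Finset ι)).PairwiseDisjoint
      (crossingEvent t) := by
  intro S hS S' hS' hne
  simp only [coe_filter, mem_univ, true_and, Set.mem_ofPred_eq] at hS hS'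
  refine Set.disjoint_left.2 fun x hx hx' => hne ?_
  obtain ⟨hcross, hSeq⟩ := (mem_crossingEvent_iff ht hS).1 hx
  obtain ⟨hcross', hSeq'⟩ := (mem_crossingEvent_iff ht hS').1 hx'
  rw [hSeq, hSeq', hcross.eq hcross' le_add_self le_add_self]

lemma sum_filter_nonempty_apply_card {M : Type*} [AddCommMonoid M] (f : ℕ → M) :
    ∑ S ∈ ({S | S.Nonempty} : Finset (Finset ι)), f #S =
      ∑ i ∈ Icc 1 (Fintype.card ι), (Fintype.card ι).choose i • f i := by
  rw [← sum_fiberwise_of_maps_to (g := card) (t := Icc 1 (Fintype.card ι))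
    fun S hS => mem_Icc.2 ⟨card_pos.2 (mem_filter.1 hS).2, card_le_univ S⟩]
  refine sum_congr rfl fun i hi => ?_
  have hfiber : {S ∈ ({S | S.Nonempty} : Finset (Finset ι)) | #S = i} = powersetCard i univ := by
    ext S
    simp only [mem_filter, mem_univ, true_and, mem_powersetCard, subset_univ, ← card_pos]
    have := (mem_Icc.1 hi).1
    omega
  rw [hfiber, sum_congr rfl fun S hS => by rw [(mem_powersetCard.1 hS).2], sum_const,
    card_powersetCard, card_univ]

lemma crossingEvent_eq_preimage :
    crossingEvent t S = MeasurableEquiv.piEquivPiSubtypeProd (fun _ => ℝ) (· ∈ S) ⁻¹'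
      ((Set.univ.pi fun _ => Set.Ioi (t (Fintype.card ι - #S + 1))) ×ˢ
        orderStatsLE (Fintype.card ι - #S) t) := by
  ext x
  simp [crossingEvent]

lemma measurableSet_crossingEvent : MeasurableSet (crossingEvent t S) := by
  rw [crossingEvent_eq_preimage]
  exact MeasurableEquiv.measurable _
    ((MeasurableSet.univ_pi fun _ => measurableSet_Ioi).prod measurableSet_orderStatsLE)

variable (μ : Measure ℝ) [SigmaFinite μ]

lemma pi_orderStatsLE_congr {κ : Type*} [Fintype κ] (e : ι ≃ κ) :
    Measure.pi (fun _ : κ => μ) (orderStatsLE n t) =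
      Measure.pi (fun _ : ι => μ) (orderStatsLE n t) := by
  rw [← (measurePreserving_piCongrLeft (fun _ => μ) e).measure_preimage_equiv]
  congr 1
  ext y
  simp only [orderStatsLE, countLE, Set.mem_preimage, Set.mem_ofPred_eq]
  refine forall₂_congr fun j _ => ?_
  rw [card_equiv e
    (t := ({l | (MeasurableEquiv.piCongrLeft (fun _ => ℝ) e) y l ≤ t j} : Finset κ))
    fun l => by simp [MeasurableEquiv.coe_piCongrLeft, Equiv.piCongrLeft_apply_apply]]

lemma pi_crossingEvent :
    Measure.pi (fun _ : ι => μ) (crossingEvent t S) =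
      μ (Set.Ioi (t (Fintype.card ι - #S + 1))) ^ #S *
        Measure.pi (fun _ : Fin (Fintype.card ι - #S) => μ)
          (orderStatsLE (Fintype.card ι - #S) t) := by
  rw [crossingEvent_eq_preimage,
    (measurePreserving_piEquivPiSubtypeProd _ _).measure_preimage_equiv, Measure.prod_prod]
  simp only [Measure.pi_pi, prod_const]
  congr 2
  · exact @Fintype.card_coe _ S (Subtype.fintype _)
  · refine pi_orderStatsLE_congr μ (Fintype.equivFinOfCardEq ?_).symm
    rw [Fintype.card_subtype, filter_not, filter_mem_eq_inter, univ_inter,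
      ← compl_eq_univ_sdiff, card_compl]

theorem pi_compl_orderStatsLE {k : ℕ} (hk : Fintype.card ι = k)
    (ht : MonotoneOn t (Set.Icc 1 k)) :
    Measure.pi (fun _ : ι => μ) (orderStatsLE k t)ᶜ =
      ∑ i ∈ Icc 1 k, k.choose i * (μ (Set.Ioi (t (k - i + 1))) ^ i *
        Measure.pi (fun _ : Fin (k - i) => μ) (orderStatsLE (k - i) t)) := by
  subst hk
  rw [compl_orderStatsLE_eq_biUnion ht, measure_biUnion_finset
    (pairwiseDisjoint_crossingEvent ht) fun _ _ => measurableSet_crossingEvent]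
  simp_rw [pi_crossingEvent]
  rw [sum_filter_nonempty_apply_card fun i => μ (Set.Ioi (t (Fintype.card ι - i + 1))) ^ i *
    Measure.pi (fun _ : Fin (Fintype.card ι - i) => μ) (orderStatsLE (Fintype.card ι - i) t)]
  simp_rw [nsmul_eq_mul]

end OrderStatistics

instance : IsProbabilityMeasure unifM := ⟨by simp [unifM, Real.volume_Ioo]⟩

lemma unifM_Ioi {c : ℝ} (hc : 0 ≤ c) : unifM (Set.Ioi c) = ENNReal.ofReal (1 - c) := by
  rw [unifM, Measure.restrict_apply measurableSet_Ioi, Set.Ioi_inter_Ioo, max_eq_left hc,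
    Real.volume_Ioo]

lemma Psi_eq_toReal (k : ℕ) (t : ℕ → ℝ) :
    Psi k t = (Measure.pi (fun _ : Fin k => unifM) (orderStatsLE k t)).toReal := rfl

/-- Bolshev's recursion for the joint c.d.f. of uniform order statistics. -/
theorem bolshev (k : ℕ) (t : ℕ → ℝ)
    (ht : MonotoneOn t (Set.Icc 1 k))
    (ht01 : ∀ j ∈ Set.Icc 1 k, t j ∈ Set.Icc (0:ℝ) 1) :
    Psi k t = 1 - ∑ i ∈ Finset.Icc 1 k,
      (k.choose i : ℝ) * (1 - t (k - i + 1)) ^ i * Psi (k - i) t := by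
  have hsum : (Measure.pi (fun _ : Fin k => unifM) (orderStatsLE k t)ᶜ).toReal =
      ∑ i ∈ Icc 1 k, (k.choose i : ℝ) * (1 - t (k - i + 1)) ^ i * Psi (k - i) t := by
    rw [pi_compl_orderStatsLE unifM (Fintype.card_fin k) ht,
      ENNReal.toReal_sum fun i _ => by finiteness]
    refine sum_congr rfl fun i hi => ?_
    obtain ⟨hi1, hik⟩ := mem_Icc.1 hi
    obtain ⟨h0, h1⟩ := ht01 (k - i + 1) ⟨by omega, by omega⟩
    rw [unifM_Ioi h0, ENNReal.toReal_mul, ENNReal.toReal_mul, ENNReal.toReal_pow,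
      ENNReal.toReal_ofReal (by linarith), ENNReal.toReal_natCast, Psi_eq_toReal, mul_assoc]
  have hcompl := probReal_compl_eq_one_sub (μ := Measure.pi fun _ : Fin k => unifM)
    (s := orderStatsLE k t) measurableSet_orderStatsLE
  rw [measureReal_def, measureReal_def, hsum] at hcompl
  rw [Psi_eq_toReal]
  linarith
end

section
/- In the unconditional independent model, the FDR of the linear step-up (Benjamini–Hochberg) procedure with threshold tₖ = αk/m equals π₀α, for any π₀ ∈ [0,1] and any continuous alternative c.d.f. F₁. -/
open MeasureTheory Finset
open scoped Classical

/-- Rejection number of the step-up procedure with threshold `t` (1-indexed, `t 0 = 0`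
by convention) applied to the `p`-values `p : Fin m → ℝ`:
the largest `k ≤ m` such that at least `k` of the `p`-values are `≤ t k`. -/
noncomputable def kSUf (m : ℕ) (t : ℕ → ℝ) (p : Fin m → ℝ) : ℕ :=
  Nat.findGreatest (fun k => k ≤ (Finset.univ.filter (fun i : Fin m => p i ≤ t k)).card) m

/-- The set of hypotheses rejected by the step-up procedure. -/
noncomputable def rejSUf (m : ℕ) (t : ℕ → ℝ) (p : Fin m → ℝ) : Finset (Fin m) :=
  Finset.univ.filter (fun i => p i ≤ t (kSUf m t p))

/-- Rejection number of the step-down procedure with threshold `t` applied to `p`: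
the largest `k ≤ m` such that for all `k' ≤ k` at least `k'` of the `p`-values are `≤ t k'`. -/
noncomputable def kSDf (m : ℕ) (t : ℕ → ℝ) (p : Fin m → ℝ) : ℕ :=
  Nat.findGreatest
    (fun k => ∀ k' ∈ Finset.Icc 1 k,
      k' ≤ (Finset.univ.filter (fun i : Fin m => p i ≤ t k')).card) m

/-- The set of hypotheses rejected by the step-down procedure. -/
noncomputable def rejSDf (m : ℕ) (t : ℕ → ℝ) (p : Fin m → ℝ) : Finset (Fin m) :=
  Finset.univ.filter (fun i => p i ≤ t (kSDf m t p))

/-- Per-coordinate law of `(Hᵢ, pᵢ)` in the unconditional independent model: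
with probability `π₀` the null holds (`Hᵢ = false`) and `pᵢ` is uniform on `(0,1)`;
with probability `1 - π₀` the alternative holds (`Hᵢ = true`) and `pᵢ ∼ μ1`. -/
noncomputable def coordM (pi0 : ℝ) (μ1 : Measure ℝ) : Measure (Bool × ℝ) :=
  (ENNReal.ofReal pi0) • ((Measure.dirac false).prod unifM)
    + (ENNReal.ofReal (1 - pi0)) • ((Measure.dirac true).prod μ1)

/-- The unconditional independent model: `m` i.i.d. copies of `(Hᵢ, pᵢ)`. -/
noncomputable def modelM (m : ℕ) (pi0 : ℝ) (μ1 : Measure ℝ) : Measure (Fin m → Bool × ℝ) :=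
  Measure.pi fun _ => coordM pi0 μ1

/-- The `p`-value family of an outcome `ω`. -/
noncomputable def pvals (m : ℕ) (ω : Fin m → Bool × ℝ) : Fin m → ℝ := fun i => (ω i).2

/-- Number of true null hypotheses rejected by the step-up procedure. -/
noncomputable def V0SU (m : ℕ) (t : ℕ → ℝ) (ω : Fin m → Bool × ℝ) : ℕ :=
  ((rejSUf m t (pvals m ω)).filter (fun i => (ω i).1 = false)).card

/-- Number of true null hypotheses rejected by the step-down procedure. -/
noncomputable def V0SD (m : ℕ) (t : ℕ → ℝ) (ω : Fin m → Bool × ℝ) : ℕ :=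
  ((rejSDf m t (pvals m ω)).filter (fun i => (ω i).1 = false)).card

/-! The step-up procedure rejects `i` iff `pᵢ ≤ t(Kᵢ)`, where `Kᵢ` is the number of rejections
after replacing `pᵢ` by `0`, and in that case it rejects exactly `Kᵢ` hypotheses. Hence
`FDP = ∑ᵢ 1{Hᵢ = 0, pᵢ ≤ t(Kᵢ)} / Kᵢ`. Since `Kᵢ` depends only on the other coordinates, it is
independent of `(Hᵢ, pᵢ)`, so `P(Hᵢ = 0, pᵢ ≤ t k, Kᵢ = k) = π₀ t k P(Kᵢ = k)` and
`FDR = π₀ ∑ᵢ E[t(Kᵢ) / Kᵢ]`, which is `π₀ α` when `t k / k = α / m`. -/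

theorem Nat.apply_findGreatest_eq_of_monotone {f : ℕ → ℕ} {m : ℕ} (hf : Monotone f)
    (hfm : ∀ k, f k ≤ m) :
    f (Nat.findGreatest (fun k => k ≤ f k) m) = Nat.findGreatest (fun k => k ≤ f k) m := by
  have hK := Nat.findGreatest_spec (P := fun k => k ≤ f k) (Nat.zero_le m) (Nat.zero_le (f 0))
  refine le_antisymm (not_lt.1 fun hlt => ?_) hK
  exact Nat.findGreatest_is_greatest hlt (hfm _) (hf hK)

theorem MeasureTheory.Measure.pi_setOf_apply_mem_and_removeNth_mem {n : ℕ} {α : Type*}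
    [MeasurableSpace α] (ν : Measure α) [SigmaFinite ν] (i : Fin (n + 1)) (A : Set α)
    (B : Set (Fin n → α)) :
    Measure.pi (fun _ => ν) {ω | ω i ∈ A ∧ i.removeNth ω ∈ B}
      = ν A * Measure.pi (fun _ => ν) B := by
  rw [← Measure.prod_prod, ← (measurePreserving_piFinSuccAbove (fun _ => ν) i).map_eq,
    MeasurableEquiv.map_apply]
  rfl

section StepUp

variable {m : ℕ} {t : ℕ → ℝ}

noncomputable def countLe (p : Fin m → ℝ) (s : ℝ) : ℕ :=
  (univ.filter fun i => p i ≤ s).card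

theorem countLe_mono (p : Fin m → ℝ) : Monotone (countLe p) := fun _ _ hs =>
  card_le_card <| monotone_filter_right _ fun _ _ hi => le_trans hi hs

theorem countLe_le (p : Fin m → ℝ) (s : ℝ) : countLe p s ≤ m :=
  (card_filter_le _ _).trans (card_fin m).le

theorem countLe_update_of_le {p : Fin m → ℝ} {i : Fin m} {x s : ℝ} (hx : x ≤ s)
    (hpi : p i ≤ s) : countLe (Function.update p i x) s = countLe p s := by
  unfold countLe
  congr 1
  refine filter_congr fun j _ => ?_
  rcases eq_or_ne j i with rfl | hj
  · simp [hx, hpi]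
  · rw [Function.update_of_ne hj]

theorem countLe_le_countLe_update (p : Fin m → ℝ) (i : Fin m) {x s : ℝ} (hx : x ≤ s) :
    countLe p s ≤ countLe (Function.update p i x) s := by
  refine card_le_card <| monotone_filter_right _ fun j _ hj => ?_
  rcases eq_or_ne j i with rfl | hne
  · simpa using hx
  · rwa [Function.update_of_ne hne]

theorem measurable_countLe (s : ℝ) : Measurable fun p : Fin m → ℝ => countLe p s := by
  simp only [countLe, card_filter]
  exact Finset.measurable_sum _ fun i _ => Measurable.ite
    (measurableSet_le (measurable_pi_apply i) measurable_const) measurable_const measurable_const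

theorem kSUf_le (p : Fin m → ℝ) : kSUf m t p ≤ m := Nat.findGreatest_le m

theorem countLe_kSUf (ht : Monotone t) (p : Fin m → ℝ) :
    countLe p (t (kSUf m t p)) = kSUf m t p :=
  Nat.apply_findGreatest_eq_of_monotone ((countLe_mono p).comp ht) fun _ => countLe_le p _

theorem card_rejSUf (ht : Monotone t) (p : Fin m → ℝ) :
    (rejSUf m t p).card = kSUf m t p :=
  countLe_kSUf ht p

theorem measurable_kSUf : Measurable (kSUf m t) :=
  measurable_findGreatest fun k _ => measurable_countLe (t k) measurableSet_Ici

theorem kSUf_le_kSUf_update (ht0 : ∀ k, 0 ≤ t k) (p : Fin m → ℝ) (i : Fin m) :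
    kSUf m t p ≤ kSUf m t (Function.update p i 0) :=
  Nat.findGreatest_mono_left (fun k hk => hk.trans (countLe_le_countLe_update p i (ht0 k))) m

theorem one_le_kSUf {p : Fin m → ℝ} {i : Fin m} (hpi : p i ≤ t 1) : 1 ≤ kSUf m t p :=
  Nat.le_findGreatest i.pos <| card_pos.2 ⟨i, by simpa using hpi⟩

theorem kSUf_eq_kSUf_update (ht : Monotone t) (ht0 : ∀ k, 0 ≤ t k) {p : Fin m → ℝ} {i : Fin m}
    (hpi : p i ≤ t (kSUf m t (Function.update p i 0))) :
    kSUf m t p = kSUf m t (Function.update p i 0) := by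
  refine le_antisymm (kSUf_le_kSUf_update ht0 p i) (Nat.le_findGreatest (kSUf_le _) ?_)
  change _ ≤ countLe p _
  rw [← countLe_update_of_le (ht0 _) hpi, countLe_kSUf ht]

theorem le_threshold_kSUf_iff (ht : Monotone t) (ht0 : ∀ k, 0 ≤ t k) {p : Fin m → ℝ} {i : Fin m} :
    p i ≤ t (kSUf m t p) ↔ p i ≤ t (kSUf m t (Function.update p i 0)) :=
  ⟨fun h => h.trans (ht (kSUf_le_kSUf_update ht0 p i)),
    fun h => (kSUf_eq_kSUf_update ht ht0 h).symm ▸ h⟩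

end StepUp

section Model

variable {m : ℕ} {t : ℕ → ℝ}

def nullLe (s : ℝ) : Set (Bool × ℝ) := {y | y.1 = false ∧ y.2 ≤ s}

/-- `loo` stands for leave one out: the step-up procedure is rerun with `pᵢ` replaced by `0`. -/
def looEvent (t : ℕ → ℝ) (i : Fin m) (k : ℕ) : Set (Fin m → Bool × ℝ) :=
  {ω | ω i ∈ nullLe (t k) ∧ kSUf m t (Function.update (pvals m ω) i 0) = k}

theorem fdp_eq_sum_indicator_looEvent (ht : Monotone t) (ht0 : ∀ k, 0 ≤ t k)
    (ω : Fin m → Bool × ℝ) :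
    (V0SU m t ω : ℝ) / max ((rejSUf m t (pvals m ω)).card : ℝ) 1
      = ∑ i, ∑ k ∈ Icc 1 m, (looEvent t i k).indicator (fun _ => (k : ℝ)⁻¹) ω := by
  rw [card_rejSUf ht, V0SU, rejSUf, filter_filter, card_filter, Nat.cast_sum, sum_div]
  refine sum_congr rfl fun i _ => ?_
  set K := kSUf m t (Function.update (pvals m ω) i 0)
  have hK : K ∈ Icc 1 m := mem_Icc.2 ⟨one_le_kSUf (i := i) (by simpa using ht0 1), kSUf_le _⟩
  rw [sum_eq_single_of_mem K hK fun k _ hk =>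
    Set.indicator_of_notMem (fun h => hk h.2.symm) _]
  have hiff : (pvals m ω i ≤ t (kSUf m t (pvals m ω)) ∧ (ω i).1 = false) ↔
      ω ∈ looEvent t i K := by
    rw [le_threshold_kSUf_iff ht ht0]
    exact ⟨fun h => ⟨⟨h.2, h.1⟩, rfl⟩, fun h => ⟨h.1.2, h.1.1⟩⟩
  by_cases h : ω ∈ looEvent t i K
  · have hK1 : (1 : ℝ) ≤ K := by exact_mod_cast (mem_Icc.1 hK).1
    rw [if_pos (hiff.2 h), Set.indicator_of_mem h, kSUf_eq_kSUf_update ht ht0 h.1.2,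
      max_eq_left hK1, Nat.cast_one, one_div]
  · rw [if_neg (hiff.not.2 h), Set.indicator_of_notMem h, Nat.cast_zero, zero_div]

end Model

instance inst_s9 : IsProbabilityMeasure unifM := by
  constructor
  rw [unifM, Measure.restrict_apply MeasurableSet.univ, Set.univ_inter, Real.volume_Ioo]
  norm_num

theorem unifM_Iic {c : ℝ} (h1 : c ≤ 1) : unifM (Set.Iic c) = ENNReal.ofReal c := by
  rw [unifM, Measure.restrict_apply measurableSet_Iic]
  refine le_antisymm ?_ ?_
  · calc volume (Set.Iic c ∩ Set.Ioo 0 1) ≤ volume (Set.Ioc 0 c) :=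
          measure_mono fun x hx => ⟨hx.2.1, hx.1⟩
      _ = ENNReal.ofReal c := by simp
  · calc ENNReal.ofReal c = volume (Set.Ioo 0 c) := by simp
      _ ≤ volume (Set.Iic c ∩ Set.Ioo 0 1) :=
          measure_mono fun x hx => ⟨hx.2.le, hx.1, hx.2.trans_le h1⟩

theorem isProbabilityMeasure_coordM {pi0 : ℝ} (h0 : 0 ≤ pi0) (h1 : pi0 ≤ 1) (μ1 : Measure ℝ)
    [IsProbabilityMeasure μ1] : IsProbabilityMeasure (coordM pi0 μ1) := by
  constructor
  rw [coordM, Measure.add_apply, Measure.smul_apply, Measure.smul_apply, measure_univ,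
    measure_univ, smul_eq_mul, smul_eq_mul, mul_one, mul_one, ← ENNReal.ofReal_add h0 (by linarith)]
  norm_num

theorem measurableSet_nullLe (s : ℝ) : MeasurableSet (nullLe s) :=
  (measurable_fst (measurableSet_singleton false)).inter (measurable_snd measurableSet_Iic)

theorem coordM_nullLe (pi0 : ℝ) (μ1 : Measure ℝ) [SFinite μ1] {c : ℝ} (h1 : c ≤ 1) :
    coordM pi0 μ1 (nullLe c) = ENNReal.ofReal pi0 * ENNReal.ofReal c := by
  have : nullLe c = {false} ×ˢ Set.Iic c := by
    ext ⟨b, x⟩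
    simp [nullLe]
  rw [coordM, this, Measure.add_apply, Measure.smul_apply, Measure.smul_apply,
    Measure.prod_prod, Measure.prod_prod, unifM_Iic h1]
  simp

theorem measurable_pvals {m : ℕ} : Measurable (pvals m) :=
  measurable_pi_lambda _ fun j => measurable_snd.comp (measurable_pi_apply j)

section LeaveOneOut

variable {n : ℕ} {t : ℕ → ℝ}

/-- The leave-one-out rejection number of `looEvent`, as a function of the coordinates other
than `i` (see `looEvent_eq`). -/
noncomputable def looCount (t : ℕ → ℝ) (i : Fin (n + 1)) (z : Fin n → Bool × ℝ) : ℕ :=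
  kSUf (n + 1) t (i.insertNth 0 (pvals n z))

theorem measurable_looCount (i : Fin (n + 1)) : Measurable (looCount t i) :=
  measurable_kSUf.comp <| (MeasurableEquiv.piFinSuccAbove (fun _ => ℝ) i).symm.measurable.comp
    (measurable_const.prodMk measurable_pvals)

theorem looEvent_eq (i : Fin (n + 1)) (k : ℕ) :
    looEvent t i k = {ω : Fin (n + 1) → Bool × ℝ |
      ω i ∈ nullLe (t k) ∧ i.removeNth ω ∈ looCount t i ⁻¹' {k}} := by
  ext ω
  simp only [looEvent, looCount, Set.mem_preimage, Set.mem_singleton_iff,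
    ← Fin.insertNth_removeNth]
  rfl

theorem measurableSet_looEvent (i : Fin (n + 1)) (k : ℕ) : MeasurableSet (looEvent t i k) := by
  have hremove :
      Measurable fun ω : Fin (n + 1) → Bool × ℝ => (i.removeNth ω : Fin n → Bool × ℝ) :=
    measurable_pi_lambda _ fun j => measurable_pi_apply (i.succAbove j)
  rw [looEvent_eq]
  exact (measurable_pi_apply i (measurableSet_nullLe _)).inter <|
    hremove (measurable_looCount i (measurableSet_singleton k))

theorem modelM_looEvent (pi0 : ℝ) (μ1 : Measure ℝ) [SFinite μ1] [SigmaFinite (coordM pi0 μ1)]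
    (i : Fin (n + 1)) {k : ℕ} (h1 : t k ≤ 1) :
    modelM (n + 1) pi0 μ1 (looEvent t i k)
      = ENNReal.ofReal pi0 * ENNReal.ofReal (t k)
        * Measure.pi (fun _ => coordM pi0 μ1) (looCount t i ⁻¹' {k}) := by
  rw [looEvent_eq, modelM, Measure.pi_setOf_apply_mem_and_removeNth_mem,
    coordM_nullLe pi0 μ1 h1]

theorem sum_measureReal_looCount (ht1 : 0 ≤ t 1) (ν : Measure (Bool × ℝ))
    [IsProbabilityMeasure ν] (i : Fin (n + 1)) :
    ∑ k ∈ Icc 1 (n + 1), (Measure.pi fun _ => ν).real (looCount t i ⁻¹' {k}) = 1 := by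
  rw [sum_measureReal_preimage_singleton _ fun k _ =>
    measurable_looCount i (measurableSet_singleton k)]
  have : looCount t i ⁻¹' (Icc 1 (n + 1) : Set ℕ) = Set.univ :=
    Set.eq_univ_of_forall fun z => mem_Icc.2 ⟨one_le_kSUf (i := i) (by simpa using ht1), kSUf_le _⟩
  rw [this, probReal_univ]

theorem integral_fdp_stepUp (ht : Monotone t) (ht0 : ∀ k, 0 ≤ t k) (ht1 : ∀ k ≤ n + 1, t k ≤ 1)
    {pi0 : ℝ} (hpi0 : 0 ≤ pi0) (μ1 : Measure ℝ) [SFinite μ1]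
    [IsProbabilityMeasure (coordM pi0 μ1)] :
    ∫ ω, (V0SU (n + 1) t ω : ℝ) / max ((rejSUf (n + 1) t (pvals (n + 1) ω)).card : ℝ) 1
        ∂modelM (n + 1) pi0 μ1
      = pi0 * ∑ i : Fin (n + 1), ∑ k ∈ Icc 1 (n + 1),
          t k / k * (Measure.pi fun _ => coordM pi0 μ1).real (looCount t i ⁻¹' {k}) := by
  have : IsProbabilityMeasure (modelM (n + 1) pi0 μ1) := by unfold modelM; infer_instance
  have hint (i : Fin (n + 1)) (k : ℕ) :
      Integrable ((looEvent t i k).indicator fun _ => (k : ℝ)⁻¹) (modelM (n + 1) pi0 μ1) :=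
    (integrable_const _).indicator (measurableSet_looEvent i k)
  simp_rw [fdp_eq_sum_indicator_looEvent ht ht0]
  rw [integral_finsetSum _ fun i _ => integrable_finsetSum _ fun k _ => hint i k, mul_sum]
  refine sum_congr rfl fun i _ => ?_
  rw [integral_finsetSum _ fun k _ => hint i k, mul_sum]
  refine sum_congr rfl fun k hk => ?_
  rw [integral_indicator_const _ (measurableSet_looEvent i k), measureReal_def,
    modelM_looEvent pi0 μ1 i (ht1 k (mem_Icc.1 hk).2), ENNReal.toReal_mul, ENNReal.toReal_mul,
    ENNReal.toReal_ofReal hpi0, ENNReal.toReal_ofReal (ht0 k), smul_eq_mul, measureReal_def]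
  ring

theorem integral_fdp_stepUp_linear {c : ℝ} (hc0 : 0 ≤ c) (hc1 : c * (n + 1) ≤ 1)
    (ht : ∀ k, t k = c * k) {pi0 : ℝ} (hpi0 : 0 ≤ pi0) (μ1 : Measure ℝ) [SFinite μ1]
    [IsProbabilityMeasure (coordM pi0 μ1)] :
    ∫ ω, (V0SU (n + 1) t ω : ℝ) / max ((rejSUf (n + 1) t (pvals (n + 1) ω)).card : ℝ) 1
        ∂modelM (n + 1) pi0 μ1
      = pi0 * c * (n + 1) := by
  have hmono : Monotone t := fun a b hab => by
    simp only [ht]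
    gcongr
  have ht0 (k : ℕ) : 0 ≤ t k := by
    rw [ht]
    positivity
  have ht1 (k : ℕ) (hk : k ≤ n + 1) : t k ≤ 1 := by
    rw [ht]
    exact le_trans (by gcongr; exact_mod_cast hk) hc1
  have hrow (i : Fin (n + 1)) : ∑ k ∈ Icc 1 (n + 1),
      t k / k * (Measure.pi fun _ => coordM pi0 μ1).real (looCount t i ⁻¹' {k}) = c := by
    rw [← mul_one c, ← sum_measureReal_looCount (ht0 1) (coordM pi0 μ1) i, mul_sum]
    refine sum_congr rfl fun k hk => ?_
    have hk0 : (k : ℝ) ≠ 0 := by exact_mod_cast (Nat.one_le_iff_ne_zero.1 (mem_Icc.1 hk).1)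
    rw [ht, mul_div_assoc, div_self hk0, mul_one]
  rw [integral_fdp_stepUp hmono ht0 ht1 hpi0 μ1]
  simp only [hrow, sum_const, card_univ, Fintype.card_fin, nsmul_eq_mul]
  push_cast
  ring

end LeaveOneOut

theorem FDR_LSU_general (m : ℕ) (hm : 2 ≤ m) (α : ℝ) (hα : α ∈ Set.Ioo (0:ℝ) 1)
    (pi0 : ℝ) (hpi0 : pi0 ∈ Set.Icc (0:ℝ) 1)
    (μ1 : Measure ℝ) [IsProbabilityMeasure μ1] :
    (∫ ω, (V0SU m (fun k => α * k / m) ω : ℝ)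
        / max ((rejSUf m (fun k => α * k / m) (pvals m ω)).card : ℝ) 1
        ∂(modelM m pi0 μ1))
      = pi0 * α := by
  obtain ⟨n, rfl⟩ : ∃ n, m = n + 1 := ⟨m - 1, by omega⟩
  have := isProbabilityMeasure_coordM hpi0.1 hpi0.2 μ1
  have hN : (0 : ℝ) < n + 1 := by positivity
  rw [integral_fdp_stepUp_linear (c := α / (n + 1 : ℕ)) (div_nonneg hα.1.le (Nat.cast_nonneg _)) ?_
    (fun k => mul_div_right_comm _ _ _) hpi0.1 μ1]
  · push_cast
    field_simp
  · push_cast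
    rw [div_mul_cancel₀ _ hN.ne']
    exact hα.2.le

/-- In the unconditional independent model, the FDR of the linear step-up
(Benjamini–Hochberg) procedure with threshold `t_k = αk/m` equals `π₀ α`. -/
theorem FDR_LSU (m : ℕ) (hm : 2 ≤ m) (α : ℝ) (hα : α ∈ Set.Ioo (0:ℝ) 1)
    (pi0 : ℝ) (hpi0 : pi0 ∈ Set.Icc (0:ℝ) 1)
    (μ1 : Measure ℝ) [IsProbabilityMeasure μ1] (hsupp : μ1 (Set.Icc 0 1) = 1)
    (hF1c : Continuous (fun s => (μ1 (Set.Iic s)).toReal)) :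
    (∫ ω, (V0SU m (fun k => α * k / m) ω : ℝ)
        / max ((rejSUf m (fun k => α * k / m) (pvals m ω)).card : ℝ) 1
        ∂(modelM m pi0 μ1))
      = pi0 * α :=
  FDR_LSU_general m hm α hα pi0 hpi0 μ1
end
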